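/- For all λμ-terms t, u and μ-variable α, the λ̄μμ̃-translation of the structural substitution (t[α := ⟨α⟩(u ·)])† reduces by zero or more linear λ̄μμ̃-reduction steps to t†[α := μ̃y.⟨u† | y · α⟩] (y fresh), and likewise for λμ-commands. -/

import Mathlib

set_option autoImplicit true

namespace CHSim

/-- Lift a de Bruijn renaming under a binder. -/
def upr (ξ : ℕ → ℕ) : ℕ → ℕ
  | 0 => 0
  | k+1 => ξ k + 1

/-! ## The λμ-calculus (de Bruijn representation).

λ-variables and μ-variables each have their own name space of de Bruijn
indices.  `abs t` is `λx.t` (binding λ-index 0) and `mabs c` is `μα.c`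
(binding μ-index 0); `cmd a t` is the command `[a]t`. -/

mutual
  inductive Tm : Type
    | var : ℕ → Tm
    | abs : Tm → Tm
    | app : Tm → Tm → Tm
    | mabs : Cm → Tm
  inductive Cm : Type
    | cmd : ℕ → Tm → Cm
end

/-- λμ-contexts `e ::= ⟨α⟩ | ⟨β⟩(t ·) | e · t`. -/
inductive Ct : Type
  | cvar : ℕ → Ct
  | push : ℕ → Tm → Ct
  | cons : Ct → Tm → Ct

/-- Filling a λμ-context with a term: `⟨α⟩⟨t⟩ = [α]t`,
`(⟨β⟩(u ·))⟨t⟩ = [β](u t)`, `(h · u)⟨t⟩ = h⟨t u⟩`. -/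
def fill : Ct → Tm → Cm
  | .cvar a, t => .cmd a t
  | .push b u, t => .cmd b (.app u t)
  | .cons h u, t => fill h (.app t u)

mutual
  /-- Renaming of λ-variables in λμ-terms. -/
  def renLT (ξ : ℕ → ℕ) : Tm → Tm
    | .var x => .var (ξ x)
    | .abs t => .abs (renLT (upr ξ) t)
    | .app t u => .app (renLT ξ t) (renLT ξ u)
    | .mabs c => .mabs (renLC ξ c)
  /-- Renaming of λ-variables in λμ-commands. -/
  def renLC (ξ : ℕ → ℕ) : Cm → Cm
    | .cmd a t => .cmd a (renLT ξ t)
end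

mutual
  /-- Renaming of μ-variables in λμ-terms. -/
  def renMT (ξ : ℕ → ℕ) : Tm → Tm
    | .var x => .var x
    | .abs t => .abs (renMT ξ t)
    | .app t u => .app (renMT ξ t) (renMT ξ u)
    | .mabs c => .mabs (renMC (upr ξ) c)
  /-- Renaming of μ-variables in λμ-commands. -/
  def renMC (ξ : ℕ → ℕ) : Cm → Cm
    | .cmd a t => .cmd (ξ a) (renMT ξ t)
end

/-- Renaming of λ-variables in λμ-contexts. -/
def renLE (ξ : ℕ → ℕ) : Ct → Ct
  | .cvar a => .cvar a
  | .push b t => .push b (renLT ξ t)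
  | .cons e t => .cons (renLE ξ e) (renLT ξ t)

/-- Renaming of μ-variables in λμ-contexts. -/
def renME (ξ : ℕ → ℕ) : Ct → Ct
  | .cvar a => .cvar (ξ a)
  | .push b t => .push (ξ b) (renMT ξ t)
  | .cons e t => .cons (renME ξ e) (renMT ξ t)

/-- Lifting a λ-substitution under a λ-binder. -/
def upsL (σ : ℕ → Tm) : ℕ → Tm
  | 0 => .var 0
  | k+1 => renLT Nat.succ (σ k)

mutual
  /-- (Capture-avoiding) substitution for λ-variables in λμ-terms. -/
  def lsubT (σ : ℕ → Tm) : Tm → Tm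
    | .var x => σ x
    | .abs t => .abs (lsubT (upsL σ) t)
    | .app t u => .app (lsubT σ t) (lsubT σ u)
    | .mabs c => .mabs (lsubC (fun k => renMT Nat.succ (σ k)) c)
  /-- Substitution for λ-variables in λμ-commands. -/
  def lsubC (σ : ℕ → Tm) : Cm → Cm
    | .cmd a t => .cmd a (lsubT σ t)
end

/-- Substitution for λ-variables in λμ-contexts. -/
def lsubE (σ : ℕ → Tm) : Ct → Ct
  | .cvar a => .cvar a
  | .push b t => .push b (lsubT σ t)
  | .cons e t => .cons (lsubE σ e) (lsubT σ t)

/-- The substitution replacing the λ-variable `x` by `u`. -/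
def sub1L (x : ℕ) (u : Tm) : ℕ → Tm := fun k => if k = x then u else .var k

/-- The β-substitution replacing the bound λ-variable 0 by `u`. -/
def sub0L (u : Tm) : ℕ → Tm
  | 0 => u
  | k+1 => .var k

/-- Lifting a structural (μ-)substitution under a μ-binder. -/
def upsM (σ : ℕ → Ct) : ℕ → Ct
  | 0 => .cvar 0
  | k+1 => renME Nat.succ (σ k)

mutual
  /-- Structural substitution of λμ-contexts for μ-variables in λμ-terms:
  every subcommand `[α]u` is replaced by `(σ α)⟨u[σ]⟩`. -/
  def msubT (σ : ℕ → Ct) : Tm → Tm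
    | .var x => .var x
    | .abs t => .abs (msubT (fun k => renLE Nat.succ (σ k)) t)
    | .app t u => .app (msubT σ t) (msubT σ u)
    | .mabs c => .mabs (msubC (upsM σ) c)
  /-- Structural substitution in λμ-commands. -/
  def msubC (σ : ℕ → Ct) : Cm → Cm
    | .cmd a t => fill (σ a) (msubT σ t)
end

/-- Structural substitution in λμ-contexts (the head variable of
`⟨β⟩(t ·)` is, by the freshness convention of the translations,
never the substituted variable, so it is left untouched). -/
def msubE (σ : ℕ → Ct) : Ct → Ct
  | .cvar a => σ a
  | .push b t => .push b (msubT σ t)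
  | .cons e t => .cons (msubE σ e) (msubT σ t)

/-- The structural substitution replacing the μ-variable `a` by the context `e`. -/
def sub1M (a : ℕ) (e : Ct) : ℕ → Ct := fun k => if k = a then e else .cvar k

/-- The structural substitution replacing the bound μ-variable 0 by the
context `e` (removing the binder). -/
def sub0M (e : Ct) : ℕ → Ct
  | 0 => e
  | k+1 => .cvar k

mutual
  /-- Number of free occurrences of the λ-variable `x` in a λμ-term. -/
  def cntLT (x : ℕ) : Tm → ℕ
    | .var y => if y = x then 1 else 0
    | .abs t => cntLT (x+1) t
    | .app t u => cntLT x t + cntLT x u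
    | .mabs c => cntLC x c
  /-- Number of free occurrences of the λ-variable `x` in a λμ-command. -/
  def cntLC (x : ℕ) : Cm → ℕ
    | .cmd _ t => cntLT x t
end

/-- λμ-values `v ::= x | λx.t`. -/
inductive IsVal : Tm → Prop
  | var (x : ℕ) : IsVal (.var x)
  | abs (t : Tm) : IsVal (.abs t)

/-! ### Reduction in λμ: congruence closure of root rules -/

mutual
  /-- Congruence (compatible) closure of root relations, term level. -/
  inductive KT (R1 : Tm → Tm → Prop) (R2 : Cm → Cm → Prop) : Tm → Tm → Prop
    | root {t t'} : R1 t t' → KT R1 R2 t t'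
    | absC {t t'} : KT R1 R2 t t' → KT R1 R2 (.abs t) (.abs t')
    | appL {t t'} (u) : KT R1 R2 t t' → KT R1 R2 (.app t u) (.app t' u)
    | appR (t) {u u'} : KT R1 R2 u u' → KT R1 R2 (.app t u) (.app t u')
    | mabsC {c c'} : KC R1 R2 c c' → KT R1 R2 (.mabs c) (.mabs c')
  /-- Congruence (compatible) closure of root relations, command level. -/
  inductive KC (R1 : Tm → Tm → Prop) (R2 : Cm → Cm → Prop) : Cm → Cm → Prop
    | root {c c'} : R2 c c' → KC R1 R2 c c'
    | cmdC (a) {t t'} : KT R1 R2 t t' → KC R1 R2 (.cmd a t) (.cmd a t')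
end

/-- Term-level root rules of the undirected λμ-calculus: β, μ, μ', θ. -/
inductive RootT : Tm → Tm → Prop
  | beta (u t : Tm) : RootT (.app (.abs u) t) (lsubT (sub0L t) u)
  | mu (c : Cm) (t : Tm) : RootT (.app (.mabs c) t)
      (.mabs (msubC (sub1M 0 (.cons (.cvar 0) (renMT Nat.succ t))) c))
  | mu' (t : Tm) (c : Cm) : RootT (.app t (.mabs c))
      (.mabs (msubC (sub1M 0 (.push 0 (renMT Nat.succ t))) c))
  | theta (t : Tm) : RootT (.mabs (.cmd 0 (renMT Nat.succ t))) t

/-- Command-level root rule of the λμ-calculus: ρ. -/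
inductive RootC : Cm → Cm → Prop
  | rho (b : ℕ) (c : Cm) : RootC (.cmd b (.mabs c)) (msubC (sub0M (.cvar b)) c)

/-- Term-level *linear* root rules of the λμ-calculus: θ, and β when the
argument is a variable or the bound variable occurs exactly once. -/
inductive RootTlin : Tm → Tm → Prop
  | beta (u t : Tm) : ((∃ y, t = Tm.var y) ∨ cntLT 0 u = 1) →
      RootTlin (.app (.abs u) t) (lsubT (sub0L t) u)
  | theta (t : Tm) : RootTlin (.mabs (.cmd 0 (renMT Nat.succ t))) t

/-- Term-level root rules of call-by-name λμ: β, μ, θ (no μ'). -/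
inductive RootTn : Tm → Tm → Prop
  | beta (u t : Tm) : RootTn (.app (.abs u) t) (lsubT (sub0L t) u)
  | mu (c : Cm) (t : Tm) : RootTn (.app (.mabs c) t)
      (.mabs (msubC (sub1M 0 (.cons (.cvar 0) (renMT Nat.succ t))) c))
  | theta (t : Tm) : RootTn (.mabs (.cmd 0 (renMT Nat.succ t))) t

/-- Term-level root rules of call-by-value λμ: βv, μv, μ', θ. -/
inductive RootTv : Tm → Tm → Prop
  | betav (u t : Tm) : IsVal t → RootTv (.app (.abs u) t) (lsubT (sub0L t) u)
  | muv (c : Cm) (t : Tm) : IsVal t → RootTv (.app (.mabs c) t)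
      (.mabs (msubC (sub1M 0 (.cons (.cvar 0) (renMT Nat.succ t))) c))
  | mu' (t : Tm) (c : Cm) : RootTv (.app t (.mabs c))
      (.mabs (msubC (sub1M 0 (.push 0 (renMT Nat.succ t))) c))
  | theta (t : Tm) : RootTv (.mabs (.cmd 0 (renMT Nat.succ t))) t

/-- Term-level *linear call-by-value* root rules of λμ. -/
inductive RootTvlin : Tm → Tm → Prop
  | betav (u t : Tm) : IsVal t → ((∃ y, t = Tm.var y) ∨ cntLT 0 u = 1) →
      RootTvlin (.app (.abs u) t) (lsubT (sub0L t) u)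
  | theta (t : Tm) : RootTvlin (.mabs (.cmd 0 (renMT Nat.succ t))) t

/-- One-step λμ-reduction (β, μ, μ', ρ, θ), terms. -/
abbrev StepT := KT RootT RootC
/-- One-step λμ-reduction (β, μ, μ', ρ, θ), commands. -/
abbrev StepC := KC RootT RootC
/-- One-step linear λμ-reduction, terms. -/
abbrev LStepT := KT RootTlin RootC
/-- One-step linear λμ-reduction, commands. -/
abbrev LStepC := KC RootTlin RootC
/-- One-step call-by-name λμ-reduction, terms. -/
abbrev StepNT := KT RootTn RootC
/-- One-step call-by-name λμ-reduction, commands. -/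
abbrev StepNC := KC RootTn RootC
/-- One-step call-by-value λμ-reduction, terms. -/
abbrev StepVT := KT RootTv RootC
/-- One-step call-by-value λμ-reduction, commands. -/
abbrev StepVC := KC RootTv RootC
/-- One-step linear call-by-value λμ-reduction, terms. -/
abbrev LStepVT := KT RootTvlin RootC
/-- One-step linear call-by-value λμ-reduction, commands. -/
abbrev LStepVC := KC RootTvlin RootC

/-- Reflexive-transitive closure. -/
abbrev Star {α : Type} (r : α → α → Prop) : α → α → Prop := Relation.ReflTransGen r

/-! ## The λ̄μμ̃-calculus (de Bruijn representation). -/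

mutual
  inductive BTm : Type
    | var : ℕ → BTm
    | abs : BTm → BTm
    | mabs : BCm → BTm
  inductive BCm : Type
    | cut : BTm → BCt → BCm
  inductive BCt : Type
    | cvar : ℕ → BCt
    | cons : BTm → BCt → BCt
    | tmu : BCm → BCt
end

mutual
  /-- Renaming of λ-variables in λ̄μμ̃-terms. -/
  def brenLT (ξ : ℕ → ℕ) : BTm → BTm
    | .var x => .var (ξ x)
    | .abs t => .abs (brenLT (upr ξ) t)
    | .mabs c => .mabs (brenLC ξ c)
  def brenLC (ξ : ℕ → ℕ) : BCm → BCm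
    | .cut t e => .cut (brenLT ξ t) (brenLE ξ e)
  def brenLE (ξ : ℕ → ℕ) : BCt → BCt
    | .cvar a => .cvar a
    | .cons t e => .cons (brenLT ξ t) (brenLE ξ e)
    | .tmu c => .tmu (brenLC (upr ξ) c)
end

mutual
  /-- Renaming of μ-variables in λ̄μμ̃-terms. -/
  def brenMT (ξ : ℕ → ℕ) : BTm → BTm
    | .var x => .var x
    | .abs t => .abs (brenMT ξ t)
    | .mabs c => .mabs (brenMC (upr ξ) c)
  def brenMC (ξ : ℕ → ℕ) : BCm → BCm
    | .cut t e => .cut (brenMT ξ t) (brenME ξ e)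
  def brenME (ξ : ℕ → ℕ) : BCt → BCt
    | .cvar a => .cvar (ξ a)
    | .cons t e => .cons (brenMT ξ t) (brenME ξ e)
    | .tmu c => .tmu (brenMC ξ c)
end

def bupsL (σ : ℕ → BTm) : ℕ → BTm
  | 0 => .var 0
  | k+1 => brenLT Nat.succ (σ k)

mutual
  /-- Substitution for λ-variables in λ̄μμ̃-terms. -/
  def blsubT (σ : ℕ → BTm) : BTm → BTm
    | .var x => σ x
    | .abs t => .abs (blsubT (bupsL σ) t)
    | .mabs c => .mabs (blsubC (fun k => brenMT Nat.succ (σ k)) c)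
  def blsubC (σ : ℕ → BTm) : BCm → BCm
    | .cut t e => .cut (blsubT σ t) (blsubE σ e)
  def blsubE (σ : ℕ → BTm) : BCt → BCt
    | .cvar a => .cvar a
    | .cons t e => .cons (blsubT σ t) (blsubE σ e)
    | .tmu c => .tmu (blsubC (bupsL σ) c)
end

def bsub1L (x : ℕ) (u : BTm) : ℕ → BTm := fun k => if k = x then u else .var k

def bsub0L (u : BTm) : ℕ → BTm
  | 0 => u
  | k+1 => .var k

def bupsM (σ : ℕ → BCt) : ℕ → BCt
  | 0 => .cvar 0
  | k+1 => brenME Nat.succ (σ k)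

mutual
  /-- Structural substitution of contexts for μ-variables in λ̄μμ̃-terms. -/
  def bmsubT (σ : ℕ → BCt) : BTm → BTm
    | .var x => .var x
    | .abs t => .abs (bmsubT (fun k => brenLE Nat.succ (σ k)) t)
    | .mabs c => .mabs (bmsubC (bupsM σ) c)
  def bmsubC (σ : ℕ → BCt) : BCm → BCm
    | .cut t e => .cut (bmsubT σ t) (bmsubE σ e)
  def bmsubE (σ : ℕ → BCt) : BCt → BCt
    | .cvar a => σ a
    | .cons t e => .cons (bmsubT σ t) (bmsubE σ e)
    | .tmu c => .tmu (bmsubC (fun k => brenLE Nat.succ (σ k)) c)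
end

def bsub1M (a : ℕ) (e : BCt) : ℕ → BCt := fun k => if k = a then e else .cvar k

def bsub0M (e : BCt) : ℕ → BCt
  | 0 => e
  | k+1 => .cvar k

mutual
  /-- Number of free occurrences of the λ-variable `x` in a λ̄μμ̃-term. -/
  def bcntLT (x : ℕ) : BTm → ℕ
    | .var y => if y = x then 1 else 0
    | .abs t => bcntLT (x+1) t
    | .mabs c => bcntLC x c
  def bcntLC (x : ℕ) : BCm → ℕ
    | .cut t e => bcntLT x t + bcntLE x e
  def bcntLE (x : ℕ) : BCt → ℕ
    | .cvar _ => 0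
    | .cons t e => bcntLT x t + bcntLE x e
    | .tmu c => bcntLC (x+1) c
end

mutual
  /-- Number of free occurrences of the μ-variable `a` in a λ̄μμ̃-term. -/
  def bcntMT (a : ℕ) : BTm → ℕ
    | .var _ => 0
    | .abs t => bcntMT a t
    | .mabs c => bcntMC (a+1) c
  def bcntMC (a : ℕ) : BCm → ℕ
    | .cut t e => bcntMT a t + bcntME a e
  def bcntME (a : ℕ) : BCt → ℕ
    | .cvar b => if b = a then 1 else 0
    | .cons t e => bcntMT a t + bcntME a e
    | .tmu c => bcntMC a c
end

/-- λ̄μμ̃-values `v ::= x | λx.t`. -/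
inductive BIsVal : BTm → Prop
  | var (x : ℕ) : BIsVal (.var x)
  | abs (t : BTm) : BIsVal (.abs t)

/-- Stacks (the contexts of λ̄μμ̃_T): `s ::= α | t · s`. -/
inductive IsStk : BCt → Prop
  | cvar (a : ℕ) : IsStk (.cvar a)
  | cons (t : BTm) {s : BCt} : IsStk s → IsStk (.cons t s)

/-! ### Reduction in λ̄μμ̃: congruence closure of root rules -/

mutual
  inductive JT (R1 : BTm → BTm → Prop) (R2 : BCm → BCm → Prop) : BTm → BTm → Prop
    | root {t t'} : R1 t t' → JT R1 R2 t t'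
    | absC {t t'} : JT R1 R2 t t' → JT R1 R2 (.abs t) (.abs t')
    | mabsC {c c'} : JC R1 R2 c c' → JT R1 R2 (.mabs c) (.mabs c')
  inductive JC (R1 : BTm → BTm → Prop) (R2 : BCm → BCm → Prop) : BCm → BCm → Prop
    | root {c c'} : R2 c c' → JC R1 R2 c c'
    | cutL {t t'} (e) : JT R1 R2 t t' → JC R1 R2 (.cut t e) (.cut t' e)
    | cutR (t) {e e'} : JE R1 R2 e e' → JC R1 R2 (.cut t e) (.cut t e')
  inductive JE (R1 : BTm → BTm → Prop) (R2 : BCm → BCm → Prop) : BCt → BCt → Prop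
    | consL {t t'} (e) : JT R1 R2 t t' → JE R1 R2 (.cons t e) (.cons t' e)
    | consR (t) {e e'} : JE R1 R2 e e' → JE R1 R2 (.cons t e) (.cons t e')
    | tmuC {c c'} : JC R1 R2 c c' → JE R1 R2 (.tmu c) (.tmu c')
end

/-- The term-level root rule of λ̄μμ̃: θ (shared by all evaluation disciplines). -/
inductive BRootT : BTm → BTm → Prop
  | theta (t : BTm) : BRootT (.mabs (.cut (brenMT Nat.succ t) (.cvar 0))) t

/-- Command-level root rules of the undirected λ̄μμ̃-calculus: β, μ, μ̃. -/
inductive BRootC : BCm → BCm → Prop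
  | beta (u t : BTm) (e : BCt) :
      BRootC (.cut (.abs u) (.cons t e)) (.cut t (.tmu (.cut u (brenLE Nat.succ e))))
  | mu (c : BCm) (e : BCt) : BRootC (.cut (.mabs c) e) (bmsubC (bsub0M e) c)
  | mutilde (t : BTm) (c : BCm) : BRootC (.cut t (.tmu c)) (blsubC (bsub0L t) c)

/-- Command-level *linear* root rules of λ̄μμ̃: β always; μ (resp. μ̃) when the
substituted context (resp. term) is a variable or the bound variable occurs
exactly once in the command. -/
inductive BRootClin : BCm → BCm → Prop
  | beta (u t : BTm) (e : BCt) :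
      BRootClin (.cut (.abs u) (.cons t e)) (.cut t (.tmu (.cut u (brenLE Nat.succ e))))
  | mu (c : BCm) (e : BCt) : ((∃ a, e = BCt.cvar a) ∨ bcntMC 0 c = 1) →
      BRootClin (.cut (.mabs c) e) (bmsubC (bsub0M e) c)
  | mutilde (t : BTm) (c : BCm) : ((∃ x, t = BTm.var x) ∨ bcntLC 0 c = 1) →
      BRootClin (.cut t (.tmu c)) (blsubC (bsub0L t) c)

/-- Command-level root rules of call-by-name λ̄μμ̃ (λ̄μμ̃_T): β, μₙ (stacks), μ̃. -/
inductive BRootCn : BCm → BCm → Prop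
  | beta (u t : BTm) (e : BCt) :
      BRootCn (.cut (.abs u) (.cons t e)) (.cut t (.tmu (.cut u (brenLE Nat.succ e))))
  | mun (c : BCm) (s : BCt) : IsStk s → BRootCn (.cut (.mabs c) s) (bmsubC (bsub0M s) c)
  | mutilde (t : BTm) (c : BCm) : BRootCn (.cut t (.tmu c)) (blsubC (bsub0L t) c)

/-- Command-level *linear call-by-name* root rules of λ̄μμ̃. -/
inductive BRootCnlin : BCm → BCm → Prop
  | beta (u t : BTm) (e : BCt) :
      BRootCnlin (.cut (.abs u) (.cons t e)) (.cut t (.tmu (.cut u (brenLE Nat.succ e))))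
  | mun (c : BCm) (s : BCt) : IsStk s → ((∃ a, s = BCt.cvar a) ∨ bcntMC 0 c = 1) →
      BRootCnlin (.cut (.mabs c) s) (bmsubC (bsub0M s) c)
  | mutilde (t : BTm) (c : BCm) : ((∃ x, t = BTm.var x) ∨ bcntLC 0 c = 1) →
      BRootCnlin (.cut t (.tmu c)) (blsubC (bsub0L t) c)

/-- Command-level root rules of call-by-value λ̄μμ̃ (λ̄μμ̃_Q): β, μ, μ̃ᵥ (values). -/
inductive BRootCv : BCm → BCm → Prop
  | beta (u t : BTm) (e : BCt) :
      BRootCv (.cut (.abs u) (.cons t e)) (.cut t (.tmu (.cut u (brenLE Nat.succ e))))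
  | mu (c : BCm) (e : BCt) : BRootCv (.cut (.mabs c) e) (bmsubC (bsub0M e) c)
  | mutildev (v : BTm) (c : BCm) : BIsVal v →
      BRootCv (.cut v (.tmu c)) (blsubC (bsub0L v) c)

/-- Command-level *linear call-by-value* root rules of λ̄μμ̃. -/
inductive BRootCvlin : BCm → BCm → Prop
  | beta (u t : BTm) (e : BCt) :
      BRootCvlin (.cut (.abs u) (.cons t e)) (.cut t (.tmu (.cut u (brenLE Nat.succ e))))
  | mu (c : BCm) (e : BCt) : ((∃ a, e = BCt.cvar a) ∨ bcntMC 0 c = 1) →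
      BRootCvlin (.cut (.mabs c) e) (bmsubC (bsub0M e) c)
  | mutildev (v : BTm) (c : BCm) : BIsVal v → ((∃ x, v = BTm.var x) ∨ bcntLC 0 c = 1) →
      BRootCvlin (.cut v (.tmu c)) (blsubC (bsub0L v) c)

/-- Command-level root rules with β' instead of β: β', μ, μ̃. -/
inductive BRootCp : BCm → BCm → Prop
  | beta' (u t : BTm) (e : BCt) :
      BRootCp (.cut (.abs u) (.cons t e)) (.cut (blsubT (bsub0L t) u) e)
  | mu (c : BCm) (e : BCt) : BRootCp (.cut (.mabs c) e) (bmsubC (bsub0M e) c)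
  | mutilde (t : BTm) (c : BCm) : BRootCp (.cut t (.tmu c)) (blsubC (bsub0L t) c)

/-- Command-level call-by-name root rules with β': β', μₙ, μ̃. -/
inductive BRootCnp : BCm → BCm → Prop
  | beta' (u t : BTm) (e : BCt) :
      BRootCnp (.cut (.abs u) (.cons t e)) (.cut (blsubT (bsub0L t) u) e)
  | mun (c : BCm) (s : BCt) : IsStk s → BRootCnp (.cut (.mabs c) s) (bmsubC (bsub0M s) c)
  | mutilde (t : BTm) (c : BCm) : BRootCnp (.cut t (.tmu c)) (blsubC (bsub0L t) c)

/-- Command-level call-by-value root rules with β': β' (values), μ, μ̃ᵥ. -/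
inductive BRootCvp : BCm → BCm → Prop
  | beta' (u v : BTm) (e : BCt) : BIsVal v →
      BRootCvp (.cut (.abs u) (.cons v e)) (.cut (blsubT (bsub0L v) u) e)
  | mu (c : BCm) (e : BCt) : BRootCvp (.cut (.mabs c) e) (bmsubC (bsub0M e) c)
  | mutildev (v : BTm) (c : BCm) : BIsVal v →
      BRootCvp (.cut v (.tmu c)) (blsubC (bsub0L v) c)

/-- One-step λ̄μμ̃-reduction (β, μ, μ̃, θ), terms. -/
abbrev BStepT := JT BRootT BRootC
abbrev BStepC := JC BRootT BRootC
abbrev BStepE := JE BRootT BRootC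
/-- One-step linear λ̄μμ̃-reduction. -/
abbrev LBStepT := JT BRootT BRootClin
abbrev LBStepC := JC BRootT BRootClin
abbrev LBStepE := JE BRootT BRootClin
/-- One-step call-by-name λ̄μμ̃-reduction. -/
abbrev BStepNT := JT BRootT BRootCn
abbrev BStepNC := JC BRootT BRootCn
abbrev BStepNE := JE BRootT BRootCn
/-- One-step linear call-by-name λ̄μμ̃-reduction. -/
abbrev LBStepNT := JT BRootT BRootCnlin
abbrev LBStepNC := JC BRootT BRootCnlin
/-- One-step call-by-value λ̄μμ̃-reduction. -/
abbrev BStepVT := JT BRootT BRootCv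
abbrev BStepVC := JC BRootT BRootCv
/-- One-step linear call-by-value λ̄μμ̃-reduction. -/
abbrev LBStepVT := JT BRootT BRootCvlin
abbrev LBStepVC := JC BRootT BRootCvlin
/-- One-step λ̄μμ̃-reduction with β' (β', μ, μ̃, θ). -/
abbrev BStepPT := JT BRootT BRootCp
abbrev BStepPC := JC BRootT BRootCp
/-- One-step call-by-name λ̄μμ̃-reduction with β'. -/
abbrev BStepNPT := JT BRootT BRootCnp
abbrev BStepNPC := JC BRootT BRootCnp
/-- One-step call-by-value λ̄μμ̃-reduction with β'. -/
abbrev BStepVPT := JT BRootT BRootCvp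
abbrev BStepVPC := JC BRootT BRootCvp

/-! ## The translation `(·)†` from λμ to λ̄μμ̃ -/

mutual
  /-- `x† = x`, `(λx.u)† = λx.u†`, `(u v)† = μβ.⟨v† | μ̃y.⟨u† | y·β⟩⟩`
  (`y`, `β` fresh, realized by de Bruijn lifting), `(μα.c)† = μα.c†`. -/
  def dagT : Tm → BTm
    | .var x => .var x
    | .abs t => .abs (dagT t)
    | .app u v => .mabs (.cut (brenMT Nat.succ (dagT v))
        (.tmu (.cut (brenLT Nat.succ (brenMT Nat.succ (dagT u)))
          (.cons (.var 0) (.cvar 0)))))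
    | .mabs c => .mabs (dagC c)
  /-- `([α]t)† = ⟨t† | α⟩`. -/
  def dagC : Cm → BCm
    | .cmd a t => .cut (dagT t) (.cvar a)
end

/-- `⟨α⟩† = α`, `(⟨β⟩(t ·))† = μ̃y.⟨t† | y·β⟩`, `(h · t)† = t† · h†`. -/
def dagE : Ct → BCt
  | .cvar a => .cvar a
  | .push b t => .tmu (.cut (brenLT Nat.succ (dagT t)) (.cons (.var 0) (.cvar b)))
  | .cons e t => .cons (dagT t) (dagE e)

/-! ## The translation `(·)∘` from λ̄μμ̃ to λμ -/

mutual
  /-- `x∘ = x`, `(λx.u)∘ = λx.u∘`, `(μα.c)∘ = μα.c∘`. -/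
  def circT : BTm → Tm
    | .var x => .var x
    | .abs t => .abs (circT t)
    | .mabs c => .mabs (circC c)
  /-- `⟨t | e⟩∘ = e∘⟨t∘⟩`. -/
  def circC : BCm → Cm
    | .cut t e => fill (circE e) (circT t)
  /-- `α∘ = ⟨α⟩`, `(t · h)∘ = h∘ · t∘`,
  `(μ̃x.c)∘ = ⟨β⟩((λx.μδ.c∘) ·)` with `δ ∉ c` (realized by lifting). -/
  def circE : BCt → Ct
    | .cvar a => .cvar a
    | .cons t e => .cons (circE e) (circT t)
    | .tmu c => .push 0 (.abs (.mabs (renMC Nat.succ (circC c))))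
end


/-! The proof is by induction on `t`.  Structural substitution commutes with the
translation, so the only case that does not go through by congruence is a command
`[α]w`: its substitution instance `[α](u w')` translates to
`⟨μβ.⟨w'† | μ̃y.⟨u† | y · β⟩⟩ | α⟩`, which is a μ-redex whose context is a variable,
hence linear, and contracts to `⟨w'† | μ̃y.⟨u† | y · α⟩⟩`.  In the de Bruijn encoding
the binders of the translation of an application lift `u†` and `w'†`, so the induction
needs linear reduction to be stable under renamings, and this in turn needs the
linearity side conditions (occurrence counts) to be preserved by injective renamings. -/

theorem upr_comp {ξ ζ ρ : ℕ → ℕ} (h : ∀ k, ξ (ζ k) = ρ k) :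
    ∀ k, upr ξ (upr ζ k) = upr ρ k
  | 0 => rfl
  | k+1 => congrArg Nat.succ (h k)

theorem upr_eq_zero_iff (ξ : ℕ → ℕ) : ∀ k, upr ξ k = 0 ↔ k = 0
  | 0 => iff_of_true rfl rfl
  | _+1 => iff_of_false (Nat.succ_ne_zero _) (Nat.succ_ne_zero _)

theorem upr_eq_succ_iff {ζ : ℕ → ℕ} {b a : ℕ} (h : ∀ k, ζ k = b ↔ k = a) :
    ∀ k, upr ζ k = b + 1 ↔ k = a + 1
  | 0 => iff_of_false (Nat.succ_ne_zero _).symm (Nat.succ_ne_zero _).symm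
  | k+1 => by simp [upr, h k]

mutual
theorem brenLT_comp {ξ ζ ρ : ℕ → ℕ} (h : ∀ k, ξ (ζ k) = ρ k) :
    ∀ t, brenLT ξ (brenLT ζ t) = brenLT ρ t
  | .var x => congrArg BTm.var (h x)
  | .abs t => congrArg BTm.abs (brenLT_comp (upr_comp h) t)
  | .mabs c => congrArg BTm.mabs (brenLC_comp h c)
theorem brenLC_comp {ξ ζ ρ : ℕ → ℕ} (h : ∀ k, ξ (ζ k) = ρ k) :
    ∀ c, brenLC ξ (brenLC ζ c) = brenLC ρ c
  | .cut t e => by simp only [brenLC, brenLT_comp h, brenLE_comp h]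
theorem brenLE_comp {ξ ζ ρ : ℕ → ℕ} (h : ∀ k, ξ (ζ k) = ρ k) :
    ∀ e, brenLE ξ (brenLE ζ e) = brenLE ρ e
  | .cvar _ => rfl
  | .cons t e => by simp only [brenLE, brenLT_comp h, brenLE_comp h]
  | .tmu c => congrArg BCt.tmu (brenLC_comp (upr_comp h) c)
end

mutual
theorem brenMT_comp {ξ ζ ρ : ℕ → ℕ} (h : ∀ k, ξ (ζ k) = ρ k) :
    ∀ t, brenMT ξ (brenMT ζ t) = brenMT ρ t
  | .var _ => rfl
  | .abs t => congrArg BTm.abs (brenMT_comp h t)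
  | .mabs c => congrArg BTm.mabs (brenMC_comp (upr_comp h) c)
theorem brenMC_comp {ξ ζ ρ : ℕ → ℕ} (h : ∀ k, ξ (ζ k) = ρ k) :
    ∀ c, brenMC ξ (brenMC ζ c) = brenMC ρ c
  | .cut t e => by simp only [brenMC, brenMT_comp h, brenME_comp h]
theorem brenME_comp {ξ ζ ρ : ℕ → ℕ} (h : ∀ k, ξ (ζ k) = ρ k) :
    ∀ e, brenME ξ (brenME ζ e) = brenME ρ e
  | .cvar a => congrArg BCt.cvar (h a)
  | .cons t e => by simp only [brenME, brenMT_comp h, brenME_comp h]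
  | .tmu c => congrArg BCt.tmu (brenMC_comp h c)
end

theorem brenLT_upr_succ (ξ : ℕ → ℕ) (t : BTm) :
    brenLT (upr ξ) (brenLT Nat.succ t) = brenLT Nat.succ (brenLT ξ t) :=
  (brenLT_comp (fun _ => rfl) t).trans
    (brenLT_comp (ξ := Nat.succ) (ζ := ξ) (fun _ => rfl) t).symm

theorem brenLE_upr_succ (ξ : ℕ → ℕ) (e : BCt) :
    brenLE (upr ξ) (brenLE Nat.succ e) = brenLE Nat.succ (brenLE ξ e) :=
  (brenLE_comp (fun _ => rfl) e).trans
    (brenLE_comp (ξ := Nat.succ) (ζ := ξ) (fun _ => rfl) e).symm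

theorem brenMT_upr_succ (ξ : ℕ → ℕ) (t : BTm) :
    brenMT (upr ξ) (brenMT Nat.succ t) = brenMT Nat.succ (brenMT ξ t) :=
  (brenMT_comp (fun _ => rfl) t).trans
    (brenMT_comp (ξ := Nat.succ) (ζ := ξ) (fun _ => rfl) t).symm

theorem brenME_upr_succ (ξ : ℕ → ℕ) (e : BCt) :
    brenME (upr ξ) (brenME Nat.succ e) = brenME Nat.succ (brenME ξ e) :=
  (brenME_comp (fun _ => rfl) e).trans
    (brenME_comp (ξ := Nat.succ) (ζ := ξ) (fun _ => rfl) e).symm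

mutual
theorem brenLT_brenMT_comm : ∀ (t : BTm) (ξ ζ : ℕ → ℕ),
    brenLT ξ (brenMT ζ t) = brenMT ζ (brenLT ξ t)
  | .var _, _, _ => rfl
  | .abs t, ξ, ζ => congrArg BTm.abs (brenLT_brenMT_comm t (upr ξ) ζ)
  | .mabs c, ξ, ζ => congrArg BTm.mabs (brenLC_brenMC_comm c ξ (upr ζ))
theorem brenLC_brenMC_comm : ∀ (c : BCm) (ξ ζ : ℕ → ℕ),
    brenLC ξ (brenMC ζ c) = brenMC ζ (brenLC ξ c)
  | .cut t e, ξ, ζ => by simp only [brenLC, brenMC, brenLT_brenMT_comm, brenLE_brenME_comm]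
theorem brenLE_brenME_comm : ∀ (e : BCt) (ξ ζ : ℕ → ℕ),
    brenLE ξ (brenME ζ e) = brenME ζ (brenLE ξ e)
  | .cvar _, _, _ => rfl
  | .cons t e, ξ, ζ => by simp only [brenLE, brenME, brenLT_brenMT_comm, brenLE_brenME_comm]
  | .tmu c, ξ, ζ => congrArg BCt.tmu (brenLC_brenMC_comm c (upr ξ) ζ)
end

mutual
theorem bmsubT_brenMT {σ τ : ℕ → BCt} {ζ : ℕ → ℕ} (h : ∀ k, σ (ζ k) = τ k) :
    ∀ t, bmsubT σ (brenMT ζ t) = bmsubT τ t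
  | .var _ => rfl
  | .abs t => congrArg BTm.abs (bmsubT_brenMT (fun k => congrArg (brenLE Nat.succ) (h k)) t)
  | .mabs c => congrArg BTm.mabs (bmsubC_brenMC (σ := bupsM σ) (ζ := upr ζ) (τ := bupsM τ)
      (fun | 0 => rfl | k+1 => congrArg (brenME Nat.succ) (h k)) c)
theorem bmsubC_brenMC {σ τ : ℕ → BCt} {ζ : ℕ → ℕ} (h : ∀ k, σ (ζ k) = τ k) :
    ∀ c, bmsubC σ (brenMC ζ c) = bmsubC τ c
  | .cut t e => by simp only [bmsubC, brenMC, bmsubT_brenMT h, bmsubE_brenME h]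
theorem bmsubE_brenME {σ τ : ℕ → BCt} {ζ : ℕ → ℕ} (h : ∀ k, σ (ζ k) = τ k) :
    ∀ e, bmsubE σ (brenME ζ e) = bmsubE τ e
  | .cvar a => h a
  | .cons t e => by simp only [bmsubE, brenME, bmsubT_brenMT h, bmsubE_brenME h]
  | .tmu c => congrArg BCt.tmu (bmsubC_brenMC (fun k => congrArg (brenLE Nat.succ) (h k)) c)
end

mutual
theorem brenMT_bmsubT {ξ : ℕ → ℕ} {σ τ : ℕ → BCt} (h : ∀ k, brenME ξ (σ k) = τ k) :
    ∀ t, brenMT ξ (bmsubT σ t) = bmsubT τ t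
  | .var _ => rfl
  | .abs t => congrArg BTm.abs (brenMT_bmsubT
      (fun k => (brenLE_brenME_comm (σ k) Nat.succ ξ).symm.trans
        (congrArg (brenLE Nat.succ) (h k))) t)
  | .mabs c => congrArg BTm.mabs (brenMC_bmsubC
      (fun | 0 => rfl
           | k+1 => (brenME_upr_succ ξ (σ k)).trans (congrArg (brenME Nat.succ) (h k))) c)
theorem brenMC_bmsubC {ξ : ℕ → ℕ} {σ τ : ℕ → BCt} (h : ∀ k, brenME ξ (σ k) = τ k) :
    ∀ c, brenMC ξ (bmsubC σ c) = bmsubC τ c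
  | .cut t e => by simp only [bmsubC, brenMC, brenMT_bmsubT h, brenME_bmsubE h]
theorem brenME_bmsubE {ξ : ℕ → ℕ} {σ τ : ℕ → BCt} (h : ∀ k, brenME ξ (σ k) = τ k) :
    ∀ e, brenME ξ (bmsubE σ e) = bmsubE τ e
  | .cvar a => h a
  | .cons t e => by simp only [bmsubE, brenME, brenMT_bmsubT h, brenME_bmsubE h]
  | .tmu c => congrArg BCt.tmu (brenMC_bmsubC
      (fun k => (brenLE_brenME_comm (σ k) Nat.succ ξ).symm.trans
        (congrArg (brenLE Nat.succ) (h k))) c)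
end

mutual
theorem brenLT_bmsubT {ξ : ℕ → ℕ} {σ τ : ℕ → BCt} (h : ∀ k, brenLE ξ (σ k) = τ k) :
    ∀ t, brenLT ξ (bmsubT σ t) = bmsubT τ (brenLT ξ t)
  | .var _ => rfl
  | .abs t => congrArg BTm.abs (brenLT_bmsubT
      (fun k => (brenLE_upr_succ ξ (σ k)).trans (congrArg (brenLE Nat.succ) (h k))) t)
  | .mabs c => congrArg BTm.mabs (brenLC_bmsubC
      (fun | 0 => rfl
           | k+1 => (brenLE_brenME_comm (σ k) ξ Nat.succ).trans
              (congrArg (brenME Nat.succ) (h k))) c)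
theorem brenLC_bmsubC {ξ : ℕ → ℕ} {σ τ : ℕ → BCt} (h : ∀ k, brenLE ξ (σ k) = τ k) :
    ∀ c, brenLC ξ (bmsubC σ c) = bmsubC τ (brenLC ξ c)
  | .cut t e => by simp only [bmsubC, brenLC, brenLT_bmsubT h, brenLE_bmsubE h]
theorem brenLE_bmsubE {ξ : ℕ → ℕ} {σ τ : ℕ → BCt} (h : ∀ k, brenLE ξ (σ k) = τ k) :
    ∀ e, brenLE ξ (bmsubE σ e) = bmsubE τ (brenLE ξ e)
  | .cvar a => h a
  | .cons t e => by simp only [bmsubE, brenLE, brenLT_bmsubT h, brenLE_bmsubE h]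
  | .tmu c => congrArg BCt.tmu (brenLC_bmsubC
      (fun k => (brenLE_upr_succ ξ (σ k)).trans (congrArg (brenLE Nat.succ) (h k))) c)
end

mutual
theorem bmsubT_eq_self {σ : ℕ → BCt} (h : ∀ k, σ k = .cvar k) : ∀ t, bmsubT σ t = t
  | .var _ => rfl
  | .abs t => congrArg BTm.abs (bmsubT_eq_self (fun k => by rw [h k]; rfl) t)
  | .mabs c => congrArg BTm.mabs (bmsubC_eq_self (σ := bupsM σ)
      (fun | 0 => rfl | k+1 => by simp only [bupsM, h k]; rfl) c)
theorem bmsubC_eq_self {σ : ℕ → BCt} (h : ∀ k, σ k = .cvar k) : ∀ c, bmsubC σ c = c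
  | .cut t e => by simp only [bmsubC, bmsubT_eq_self h, bmsubE_eq_self h]
theorem bmsubE_eq_self {σ : ℕ → BCt} (h : ∀ k, σ k = .cvar k) : ∀ e, bmsubE σ e = e
  | .cvar a => h a
  | .cons t e => by simp only [bmsubE, bmsubT_eq_self h, bmsubE_eq_self h]
  | .tmu c => congrArg BCt.tmu (bmsubC_eq_self (fun k => by rw [h k]; rfl) c)
end

mutual
theorem blsubT_brenLT {σ τ : ℕ → BTm} {ζ : ℕ → ℕ} (h : ∀ k, σ (ζ k) = τ k) :
    ∀ t, blsubT σ (brenLT ζ t) = blsubT τ t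
  | .var x => h x
  | .abs t => congrArg BTm.abs (blsubT_brenLT
      (fun | 0 => rfl | k+1 => congrArg (brenLT Nat.succ) (h k)) t)
  | .mabs c => congrArg BTm.mabs (blsubC_brenLC (fun k => congrArg (brenMT Nat.succ) (h k)) c)
theorem blsubC_brenLC {σ τ : ℕ → BTm} {ζ : ℕ → ℕ} (h : ∀ k, σ (ζ k) = τ k) :
    ∀ c, blsubC σ (brenLC ζ c) = blsubC τ c
  | .cut t e => by simp only [blsubC, brenLC, blsubT_brenLT h, blsubE_brenLE h]
theorem blsubE_brenLE {σ τ : ℕ → BTm} {ζ : ℕ → ℕ} (h : ∀ k, σ (ζ k) = τ k) :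
    ∀ e, blsubE σ (brenLE ζ e) = blsubE τ e
  | .cvar _ => rfl
  | .cons t e => by simp only [blsubE, brenLE, blsubT_brenLT h, blsubE_brenLE h]
  | .tmu c => congrArg BCt.tmu (blsubC_brenLC
      (fun | 0 => rfl | k+1 => congrArg (brenLT Nat.succ) (h k)) c)
end

mutual
theorem brenLT_blsubT {ξ : ℕ → ℕ} {σ τ : ℕ → BTm} (h : ∀ k, brenLT ξ (σ k) = τ k) :
    ∀ t, brenLT ξ (blsubT σ t) = blsubT τ t
  | .var x => h x
  | .abs t => congrArg BTm.abs (brenLT_blsubT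
      (fun | 0 => rfl
           | k+1 => (brenLT_upr_succ ξ (σ k)).trans (congrArg (brenLT Nat.succ) (h k))) t)
  | .mabs c => congrArg BTm.mabs (brenLC_blsubC
      (fun k => (brenLT_brenMT_comm (σ k) ξ Nat.succ).trans
        (congrArg (brenMT Nat.succ) (h k))) c)
theorem brenLC_blsubC {ξ : ℕ → ℕ} {σ τ : ℕ → BTm} (h : ∀ k, brenLT ξ (σ k) = τ k) :
    ∀ c, brenLC ξ (blsubC σ c) = blsubC τ c
  | .cut t e => by simp only [blsubC, brenLC, brenLT_blsubT h, brenLE_blsubE h]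
theorem brenLE_blsubE {ξ : ℕ → ℕ} {σ τ : ℕ → BTm} (h : ∀ k, brenLT ξ (σ k) = τ k) :
    ∀ e, brenLE ξ (blsubE σ e) = blsubE τ e
  | .cvar _ => rfl
  | .cons t e => by simp only [blsubE, brenLE, brenLT_blsubT h, brenLE_blsubE h]
  | .tmu c => congrArg BCt.tmu (brenLC_blsubC
      (fun | 0 => rfl
           | k+1 => (brenLT_upr_succ ξ (σ k)).trans (congrArg (brenLT Nat.succ) (h k))) c)
end

mutual
theorem brenMT_blsubT {ξ : ℕ → ℕ} {σ τ : ℕ → BTm} (h : ∀ k, brenMT ξ (σ k) = τ k) :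
    ∀ t, brenMT ξ (blsubT σ t) = blsubT τ (brenMT ξ t)
  | .var x => h x
  | .abs t => congrArg BTm.abs (brenMT_blsubT
      (fun | 0 => rfl
           | k+1 => (brenLT_brenMT_comm (σ k) Nat.succ ξ).symm.trans
              (congrArg (brenLT Nat.succ) (h k))) t)
  | .mabs c => congrArg BTm.mabs (brenMC_blsubC
      (fun k => (brenMT_upr_succ ξ (σ k)).trans (congrArg (brenMT Nat.succ) (h k))) c)
theorem brenMC_blsubC {ξ : ℕ → ℕ} {σ τ : ℕ → BTm} (h : ∀ k, brenMT ξ (σ k) = τ k) :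
    ∀ c, brenMC ξ (blsubC σ c) = blsubC τ (brenMC ξ c)
  | .cut t e => by simp only [blsubC, brenMC, brenMT_blsubT h, brenME_blsubE h]
theorem brenME_blsubE {ξ : ℕ → ℕ} {σ τ : ℕ → BTm} (h : ∀ k, brenMT ξ (σ k) = τ k) :
    ∀ e, brenME ξ (blsubE σ e) = blsubE τ (brenME ξ e)
  | .cvar _ => rfl
  | .cons t e => by simp only [blsubE, brenME, brenMT_blsubT h, brenME_blsubE h]
  | .tmu c => congrArg BCt.tmu (brenMC_blsubC
      (fun | 0 => rfl
           | k+1 => (brenLT_brenMT_comm (σ k) Nat.succ ξ).symm.trans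
              (congrArg (brenLT Nat.succ) (h k))) c)
end

mutual
theorem bcntMT_brenMT {ζ : ℕ → ℕ} {b a : ℕ} (h : ∀ k, ζ k = b ↔ k = a) :
    ∀ t, bcntMT b (brenMT ζ t) = bcntMT a t
  | .var _ => rfl
  | .abs t => bcntMT_brenMT h t
  | .mabs c => bcntMC_brenMC (upr_eq_succ_iff h) c
theorem bcntMC_brenMC {ζ : ℕ → ℕ} {b a : ℕ} (h : ∀ k, ζ k = b ↔ k = a) :
    ∀ c, bcntMC b (brenMC ζ c) = bcntMC a c
  | .cut t e => by simp only [brenMC, bcntMC, bcntMT_brenMT h, bcntME_brenME h]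
theorem bcntME_brenME {ζ : ℕ → ℕ} {b a : ℕ} (h : ∀ k, ζ k = b ↔ k = a) :
    ∀ e, bcntME b (brenME ζ e) = bcntME a e
  | .cvar x => by simp only [brenME, bcntME, h x]
  | .cons t e => by simp only [brenME, bcntME, bcntMT_brenMT h, bcntME_brenME h]
  | .tmu c => bcntMC_brenMC h c
end

mutual
theorem bcntMT_brenLT (a : ℕ) (ξ : ℕ → ℕ) : ∀ t, bcntMT a (brenLT ξ t) = bcntMT a t
  | .var _ => rfl
  | .abs t => bcntMT_brenLT a (upr ξ) t
  | .mabs c => bcntMC_brenLC (a + 1) ξ c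
theorem bcntMC_brenLC (a : ℕ) (ξ : ℕ → ℕ) : ∀ c, bcntMC a (brenLC ξ c) = bcntMC a c
  | .cut t e => by simp only [brenLC, bcntMC, bcntMT_brenLT a ξ, bcntME_brenLE a ξ]
theorem bcntME_brenLE (a : ℕ) (ξ : ℕ → ℕ) : ∀ e, bcntME a (brenLE ξ e) = bcntME a e
  | .cvar _ => rfl
  | .cons t e => by simp only [brenLE, bcntME, bcntMT_brenLT a ξ, bcntME_brenLE a ξ]
  | .tmu c => bcntMC_brenLC a (upr ξ) c
end

mutual
theorem bcntLT_brenLT {ζ : ℕ → ℕ} {b a : ℕ} (h : ∀ k, ζ k = b ↔ k = a) :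
    ∀ t, bcntLT b (brenLT ζ t) = bcntLT a t
  | .var x => by simp only [brenLT, bcntLT, h x]
  | .abs t => bcntLT_brenLT (upr_eq_succ_iff h) t
  | .mabs c => bcntLC_brenLC h c
theorem bcntLC_brenLC {ζ : ℕ → ℕ} {b a : ℕ} (h : ∀ k, ζ k = b ↔ k = a) :
    ∀ c, bcntLC b (brenLC ζ c) = bcntLC a c
  | .cut t e => by simp only [brenLC, bcntLC, bcntLT_brenLT h, bcntLE_brenLE h]
theorem bcntLE_brenLE {ζ : ℕ → ℕ} {b a : ℕ} (h : ∀ k, ζ k = b ↔ k = a) :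
    ∀ e, bcntLE b (brenLE ζ e) = bcntLE a e
  | .cvar _ => rfl
  | .cons t e => by simp only [brenLE, bcntLE, bcntLT_brenLT h, bcntLE_brenLE h]
  | .tmu c => bcntLC_brenLC (upr_eq_succ_iff h) c
end

mutual
theorem bcntLT_brenMT (x : ℕ) (ξ : ℕ → ℕ) : ∀ t, bcntLT x (brenMT ξ t) = bcntLT x t
  | .var _ => rfl
  | .abs t => bcntLT_brenMT (x + 1) ξ t
  | .mabs c => bcntLC_brenMC x (upr ξ) c
theorem bcntLC_brenMC (x : ℕ) (ξ : ℕ → ℕ) : ∀ c, bcntLC x (brenMC ξ c) = bcntLC x c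
  | .cut t e => by simp only [brenMC, bcntLC, bcntLT_brenMT x ξ, bcntLE_brenME x ξ]
theorem bcntLE_brenME (x : ℕ) (ξ : ℕ → ℕ) : ∀ e, bcntLE x (brenME ξ e) = bcntLE x e
  | .cvar _ => rfl
  | .cons t e => by simp only [brenME, bcntLE, bcntLT_brenMT x ξ, bcntLE_brenME x ξ]
  | .tmu c => bcntLC_brenMC (x + 1) ξ c
end

theorem brenMC_bmsubC_bsub0M (ξ : ℕ → ℕ) (e : BCt) (c : BCm) :
    brenMC ξ (bmsubC (bsub0M e) c) = bmsubC (bsub0M (brenME ξ e)) (brenMC (upr ξ) c) :=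
  (brenMC_bmsubC (fun _ => rfl) c).trans
    (bmsubC_brenMC (fun | 0 => rfl | _+1 => rfl) c).symm

theorem brenLC_bmsubC_bsub0M (ξ : ℕ → ℕ) (e : BCt) (c : BCm) :
    brenLC ξ (bmsubC (bsub0M e) c) = bmsubC (bsub0M (brenLE ξ e)) (brenLC ξ c) := by
  rw [brenLC_bmsubC (τ := bsub0M (brenLE ξ e)) (fun | 0 => rfl | _+1 => rfl)]

theorem brenMC_blsubC_bsub0L (ξ : ℕ → ℕ) (t : BTm) (c : BCm) :
    brenMC ξ (blsubC (bsub0L t) c) = blsubC (bsub0L (brenMT ξ t)) (brenMC ξ c) :=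
  brenMC_blsubC (fun | 0 => rfl | _+1 => rfl) c

theorem brenLC_blsubC_bsub0L (ξ : ℕ → ℕ) (t : BTm) (c : BCm) :
    brenLC ξ (blsubC (bsub0L t) c) = blsubC (bsub0L (brenLT ξ t)) (brenLC (upr ξ) c) :=
  (brenLC_blsubC (fun _ => rfl) c).trans
    (blsubC_brenLC (fun | 0 => rfl | _+1 => rfl) c).symm

mutual
theorem dagT_renLT (ξ : ℕ → ℕ) : ∀ t, dagT (renLT ξ t) = brenLT ξ (dagT t)
  | .var _ => rfl
  | .abs t => congrArg BTm.abs (dagT_renLT (upr ξ) t)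
  | .app u v => by
      simp only [renLT, dagT, brenLT, brenLC, brenLE, dagT_renLT ξ u, dagT_renLT ξ v,
        brenLT_brenMT_comm, brenLT_upr_succ, upr]
  | .mabs c => congrArg BTm.mabs (dagC_renLC ξ c)
theorem dagC_renLC (ξ : ℕ → ℕ) : ∀ c, dagC (renLC ξ c) = brenLC ξ (dagC c)
  | .cmd _ t => by simp only [renLC, dagC, brenLC, brenLE, dagT_renLT ξ t]
end

mutual
theorem dagT_renMT (ξ : ℕ → ℕ) : ∀ t, dagT (renMT ξ t) = brenMT ξ (dagT t)
  | .var _ => rfl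
  | .abs t => congrArg BTm.abs (dagT_renMT ξ t)
  | .app u v => by
      simp only [renMT, dagT, brenMT, brenMC, brenME, dagT_renMT ξ u, dagT_renMT ξ v,
        ← brenLT_brenMT_comm, brenMT_upr_succ, upr]
  | .mabs c => congrArg BTm.mabs (dagC_renMC (upr ξ) c)
theorem dagC_renMC (ξ : ℕ → ℕ) : ∀ c, dagC (renMC ξ c) = brenMC ξ (dagC c)
  | .cmd _ t => by simp only [renMC, dagC, brenMC, brenME, dagT_renMT ξ t]
end

theorem rootT_brenMT (ξ : ℕ → ℕ) {t t' : BTm} (h : BRootT t t') :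
    BRootT (brenMT ξ t) (brenMT ξ t') := by
  cases h
  have := BRootT.theta (brenMT ξ t')
  rwa [← brenMT_upr_succ] at this

theorem rootT_brenLT (ξ : ℕ → ℕ) {t t' : BTm} (h : BRootT t t') :
    BRootT (brenLT ξ t) (brenLT ξ t') := by
  cases h
  have := BRootT.theta (brenLT ξ t')
  rwa [← brenLT_brenMT_comm] at this

theorem rootClin_brenMC (ξ : ℕ → ℕ) {c c' : BCm} (h : BRootClin c c') :
    BRootClin (brenMC ξ c) (brenMC ξ c') := by
  cases h with
  | beta u t e =>
      have := BRootClin.beta (brenMT ξ u) (brenMT ξ t) (brenME ξ e)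
      rwa [brenLE_brenME_comm] at this
  | mu c e hlin =>
      rw [brenMC_bmsubC_bsub0M]
      refine .mu _ _ (hlin.imp ?_ ?_)
      · rintro ⟨b, rfl⟩
        exact ⟨ξ b, rfl⟩
      · exact (bcntMC_brenMC (upr_eq_zero_iff ξ) c).trans
  | mutilde t c hlin =>
      rw [brenMC_blsubC_bsub0L]
      refine .mutilde _ _ (hlin.imp ?_ ?_)
      · rintro ⟨x, rfl⟩
        exact ⟨x, rfl⟩
      · exact (bcntLC_brenMC 0 ξ c).trans

theorem rootClin_brenLC (ξ : ℕ → ℕ) {c c' : BCm} (h : BRootClin c c') :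
    BRootClin (brenLC ξ c) (brenLC ξ c') := by
  cases h with
  | beta u t e =>
      have := BRootClin.beta (brenLT (upr ξ) u) (brenLT ξ t) (brenLE ξ e)
      rwa [← brenLE_upr_succ] at this
  | mu c e hlin =>
      rw [brenLC_bmsubC_bsub0M]
      refine .mu _ _ (hlin.imp ?_ ?_)
      · rintro ⟨b, rfl⟩
        exact ⟨b, rfl⟩
      · exact (bcntMC_brenLC 0 ξ c).trans
  | mutilde t c hlin =>
      rw [brenLC_blsubC_bsub0L]
      refine .mutilde _ _ (hlin.imp ?_ ?_)
      · rintro ⟨x, rfl⟩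
        exact ⟨ξ x, rfl⟩
      · exact (bcntLC_brenLC (upr_eq_zero_iff ξ) c).trans

mutual
theorem lbstepT_brenMT (ξ : ℕ → ℕ) : ∀ {t t' : BTm}, LBStepT t t' →
    LBStepT (brenMT ξ t) (brenMT ξ t')
  | _, _, .root h => .root (rootT_brenMT ξ h)
  | _, _, .absC h => .absC (lbstepT_brenMT ξ h)
  | _, _, .mabsC h => .mabsC (lbstepC_brenMC (upr ξ) h)
theorem lbstepC_brenMC (ξ : ℕ → ℕ) : ∀ {c c' : BCm}, LBStepC c c' →
    LBStepC (brenMC ξ c) (brenMC ξ c')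
  | _, _, .root h => .root (rootClin_brenMC ξ h)
  | _, _, .cutL _ h => .cutL _ (lbstepT_brenMT ξ h)
  | _, _, .cutR _ h => .cutR _ (lbstepE_brenME ξ h)
theorem lbstepE_brenME (ξ : ℕ → ℕ) : ∀ {e e' : BCt}, LBStepE e e' →
    LBStepE (brenME ξ e) (brenME ξ e')
  | _, _, .consL _ h => .consL _ (lbstepT_brenMT ξ h)
  | _, _, .consR _ h => .consR _ (lbstepE_brenME ξ h)
  | _, _, .tmuC h => .tmuC (lbstepC_brenMC ξ h)
end

mutual
theorem lbstepT_brenLT (ξ : ℕ → ℕ) : ∀ {t t' : BTm}, LBStepT t t' →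
    LBStepT (brenLT ξ t) (brenLT ξ t')
  | _, _, .root h => .root (rootT_brenLT ξ h)
  | _, _, .absC h => .absC (lbstepT_brenLT (upr ξ) h)
  | _, _, .mabsC h => .mabsC (lbstepC_brenLC ξ h)
theorem lbstepC_brenLC (ξ : ℕ → ℕ) : ∀ {c c' : BCm}, LBStepC c c' →
    LBStepC (brenLC ξ c) (brenLC ξ c')
  | _, _, .root h => .root (rootClin_brenLC ξ h)
  | _, _, .cutL _ h => .cutL _ (lbstepT_brenLT ξ h)
  | _, _, .cutR _ h => .cutR _ (lbstepE_brenLE ξ h)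
theorem lbstepE_brenLE (ξ : ℕ → ℕ) : ∀ {e e' : BCt}, LBStepE e e' →
    LBStepE (brenLE ξ e) (brenLE ξ e')
  | _, _, .consL _ h => .consL _ (lbstepT_brenLT ξ h)
  | _, _, .consR _ h => .consR _ (lbstepE_brenLE ξ h)
  | _, _, .tmuC h => .tmuC (lbstepC_brenLC (upr ξ) h)
end

theorem star_abs {t t' : BTm} (h : Star LBStepT t t') : Star LBStepT (.abs t) (.abs t') :=
  h.lift BTm.abs fun _ _ => JT.absC

theorem star_mabs {c c' : BCm} (h : Star LBStepC c c') : Star LBStepT (.mabs c) (.mabs c') :=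
  h.lift BTm.mabs fun _ _ => JT.mabsC

theorem star_cutL (e : BCt) {t t' : BTm} (h : Star LBStepT t t') :
    Star LBStepC (.cut t e) (.cut t' e) :=
  h.lift (BCm.cut · e) fun _ _ => JC.cutL e

theorem star_cutR (t : BTm) {e e' : BCt} (h : Star LBStepE e e') :
    Star LBStepC (.cut t e) (.cut t e') :=
  h.lift (BCm.cut t) fun _ _ => JC.cutR t

theorem star_tmu {c c' : BCm} (h : Star LBStepC c c') : Star LBStepE (.tmu c) (.tmu c') :=
  h.lift BCt.tmu fun _ _ => JE.tmuC

theorem star_brenMT (ξ : ℕ → ℕ) {t t' : BTm} (h : Star LBStepT t t') :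
    Star LBStepT (brenMT ξ t) (brenMT ξ t') :=
  h.lift (brenMT ξ) fun _ _ => lbstepT_brenMT ξ

theorem star_brenLT (ξ : ℕ → ℕ) {t t' : BTm} (h : Star LBStepT t t') :
    Star LBStepT (brenLT ξ t) (brenLT ξ t') :=
  h.lift (brenLT ξ) fun _ _ => lbstepT_brenLT ξ

/-- `μ̃y.⟨U | y · α⟩`; `bpush a u†` is the translation of the λμ-context `⟨α⟩(u ·)`. -/
def bpush (a : ℕ) (U : BTm) : BCt :=
  .tmu (.cut (brenLT Nat.succ U) (.cons (.var 0) (.cvar a)))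

/-- `μβ.⟨V | μ̃y.⟨U | y · β⟩⟩`, so that `(u v)† = bapp u† v†`. -/
def bapp (U V : BTm) : BTm :=
  .mabs (.cut (brenMT Nat.succ V) (bpush 0 (brenMT Nat.succ U)))

theorem dagT_app (u v : Tm) : dagT (.app u v) = bapp (dagT u) (dagT v) := rfl

theorem brenLE_bpush (ξ : ℕ → ℕ) (a : ℕ) (U : BTm) :
    brenLE ξ (bpush a U) = bpush a (brenLT ξ U) := by
  simp only [bpush, brenLE, brenLC, brenLT, brenLT_upr_succ, upr]

theorem brenME_bpush (ξ : ℕ → ℕ) (a : ℕ) (U : BTm) :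
    brenME ξ (bpush a U) = bpush (ξ a) (brenMT ξ U) := by
  simp only [bpush, brenME, brenMC, brenMT, brenLT_brenMT_comm]

theorem bmsubE_bpush {σ : ℕ → BCt} {a b : ℕ} (h : σ a = .cvar b) (U : BTm) :
    bmsubE σ (bpush a U) = bpush b (bmsubT σ U) := by
  simp only [bpush, bmsubE, bmsubC, bmsubT, h, ← brenLT_bmsubT (fun _ => rfl) U]
  rfl

theorem bmsubT_bupsM_brenMT_succ (σ : ℕ → BCt) (t : BTm) :
    bmsubT (bupsM σ) (brenMT Nat.succ t) = brenMT Nat.succ (bmsubT σ t) :=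
  (bmsubT_brenMT (fun _ => rfl) t).trans (brenMT_bmsubT (fun _ => rfl) t).symm

theorem bmsubT_bsub0M_brenMT_succ (e : BCt) (t : BTm) :
    bmsubT (bsub0M e) (brenMT Nat.succ t) = t :=
  (bmsubT_brenMT (fun _ => rfl) t).trans (bmsubT_eq_self (fun _ => rfl) t)

theorem bmsubT_bapp (σ : ℕ → BCt) (U V : BTm) :
    bmsubT σ (bapp U V) = bapp (bmsubT σ U) (bmsubT σ V) := by
  simp only [bapp, bmsubT, bmsubC, bmsubE_bpush (rfl : bupsM σ 0 = .cvar 0),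
    bmsubT_bupsM_brenMT_succ]

theorem lbstepC_bapp_cvar (U V : BTm) (a : ℕ) :
    LBStepC (.cut (bapp U V) (.cvar a)) (.cut V (bpush a U)) := by
  have h := JC.root (R1 := BRootT)
    (BRootClin.mu (.cut (brenMT Nat.succ V) (bpush 0 (brenMT Nat.succ U))) (.cvar a)
      (.inl ⟨a, rfl⟩))
  simp only [bmsubC, bmsubT_bsub0M_brenMT_succ,
    bmsubE_bpush (rfl : bsub0M (.cvar a) 0 = .cvar a)] at h
  exact h

theorem star_bpush (a : ℕ) {U U' : BTm} (h : Star LBStepT U U') :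
    Star LBStepE (bpush a U) (bpush a U') :=
  star_tmu (star_cutL _ (star_brenLT _ h))

theorem star_bapp {U U' V V' : BTm} (hU : Star LBStepT U U') (hV : Star LBStepT V V') :
    Star LBStepT (bapp U V) (bapp U' V') :=
  star_mabs ((star_cutL _ (star_brenMT _ hV)).trans
    (star_cutR _ (star_bpush 0 (star_brenMT _ hU))))

theorem renLE_sub1M_push (a : ℕ) (u : Tm) :
    (fun k => renLE Nat.succ (sub1M a (.push a u) k)) = sub1M a (.push a (renLT Nat.succ u)) := by
  funext k
  by_cases hk : k = a <;> simp [sub1M, hk, renLE]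

theorem upsM_sub1M_push (a : ℕ) (u : Tm) :
    upsM (sub1M a (.push a u)) = sub1M (a + 1) (.push (a + 1) (renMT Nat.succ u)) := by
  funext k
  cases k with
  | zero => simp [upsM, sub1M]
  | succ k => by_cases hk : k = a <;> simp [upsM, sub1M, hk, renME]

theorem brenLE_bsub1M_bpush (a : ℕ) (U : BTm) :
    (fun k => brenLE Nat.succ (bsub1M a (bpush a U) k)) =
      bsub1M a (bpush a (brenLT Nat.succ U)) := by
  funext k
  by_cases hk : k = a <;> simp [bsub1M, hk, brenLE, brenLE_bpush]

theorem bupsM_bsub1M_bpush (a : ℕ) (U : BTm) :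
    bupsM (bsub1M a (bpush a U)) = bsub1M (a + 1) (bpush (a + 1) (brenMT Nat.succ U)) := by
  funext k
  cases k with
  | zero => simp [bupsM, bsub1M]
  | succ k => by_cases hk : k = a <;> simp [bupsM, bsub1M, hk, brenME, brenME_bpush]

mutual
theorem dagT_msubT_push : ∀ (t : Tm) (a : ℕ) (u : Tm),
    Star LBStepT (dagT (msubT (sub1M a (.push a u)) t))
      (bmsubT (bsub1M a (bpush a (dagT u))) (dagT t))
  | .var _, _, _ => .refl
  | .abs t, a, u => by
      have ih := dagT_msubT_push t a (renLT Nat.succ u)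
      rw [dagT_renLT] at ih
      simp only [msubT, dagT, bmsubT, renLE_sub1M_push, brenLE_bsub1M_bpush]
      exact star_abs ih
  | .app t v, a, u => by
      simp only [msubT, dagT_app, bmsubT_bapp]
      exact star_bapp (dagT_msubT_push t a u) (dagT_msubT_push v a u)
  | .mabs c, a, u => by
      have ih := dagC_msubC_push c (a + 1) (renMT Nat.succ u)
      rw [dagT_renMT] at ih
      simp only [msubT, dagT, bmsubT, upsM_sub1M_push, bupsM_bsub1M_bpush]
      exact star_mabs ih
theorem dagC_msubC_push : ∀ (c : Cm) (a : ℕ) (u : Tm),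
    Star LBStepC (dagC (msubC (sub1M a (.push a u)) c))
      (bmsubC (bsub1M a (bpush a (dagT u))) (dagC c))
  | .cmd b t, a, u => by
      have ih := dagT_msubT_push t a u
      by_cases hb : b = a
      · subst hb
        simp only [msubC, dagC, bmsubC, bmsubE, sub1M, bsub1M, ↓reduceIte, fill, dagT_app]
        exact (star_cutL _ (star_bapp .refl ih)).tail (lbstepC_bapp_cvar _ _ b)
      · simp only [msubC, dagC, bmsubC, bmsubE, sub1M, bsub1M, if_neg hb, fill]
        exact star_cutL _ ih
end

/-- `(t[α := ⟨α⟩(u ·)])†` reduces by zero or more linear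
λ̄μμ̃-steps to `t†[α := μ̃y.⟨u† | y · α⟩]` (`y` fresh, realized by de Bruijn
lifting), and likewise for λμ-commands. -/
theorem dag_muprime_subst (a : ℕ) (u : Tm) :
    (∀ t : Tm, Star LBStepT
      (dagT (msubT (sub1M a (Ct.push a u)) t))
      (bmsubT (bsub1M a (BCt.tmu (BCm.cut (brenLT Nat.succ (dagT u))
        (BCt.cons (BTm.var 0) (BCt.cvar a))))) (dagT t))) ∧
    (∀ c : Cm, Star LBStepC
      (dagC (msubC (sub1M a (Ct.push a u)) c))
      (bmsubC (bsub1M a (BCt.tmu (BCm.cut (brenLT Nat.succ (dagT u))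
        (BCt.cons (BTm.var 0) (BCt.cvar a))))) (dagC c))) :=
  ⟨fun t => dagT_msubT_push t a u, fun c => dagC_msubC_push c a u⟩

end CHSim
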